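/- Suppose in a z-ary fat-tree each core switch with index j (0 ≤ j ≤ z²/4 − 1) is reachable from pod p only through the aggregation switch in position ⌊j/(z/2)⌋ of pod p. Then any inter-pod flow routed through core switch j must traverse the aggregation switches in position ⌊j/(z/2)⌋ in both its source pod and destination pod; consequently, the set of flows that can be carried by the cores in a fixed congruence class {j : ⌊j/(z/2)⌋ = q} is determined independently of other congruence classes, and the minimum number of active core nodes decomposes as the sum over congruence classes of independent vector bin packing optima. -/

import Mathlib

/-!
A core `(q, r)` can only be reached through the aggregation switch in position `q`, so a feasible
routing `c` is the same thing as a family of assignments `g q` of the flows of class `q` to the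
`h` cores `(q, ·)`, via `c m = (cls m, g (cls m) m)`. Under this correspondence the capacity
constraints of `c` split into those of the `g q`, and the active cores of `c` are the disjoint union
over `q` of the bins used by `g q`. Optimal `g q` therefore glue to a routing of cost at most the sum
of the per-class optima, and an optimal routing restricts to per-class packings of total cost equal
to its own.
-/

open Finset

section Routing

variable {ι Q B : Type*}

def routeOf (cls : ι → Q) (g : Q → ι → B) (m : ι) : Q × B := (cls m, g (cls m) m)

variable (cls : ι → Q) (g : Q → ι → B)

lemma eq_routeOf_snd {c : ι → Q × B} (hc : ∀ m, (c m).1 = cls m) :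
    c = routeOf cls fun _ m => (c m).2 :=
  funext fun m => Prod.ext (hc m) rfl

variable [Fintype ι] [DecidableEq Q] [DecidableEq B]

lemma filter_routeOf_eq (q : Q) (r : B) :
    univ.filter (fun m => routeOf cls g m = (q, r))
      = univ.filter (fun m => cls m = q ∧ g q m = r) := by
  ext m
  simp only [mem_filter, mem_univ, true_and, routeOf, Prod.mk.injEq]
  constructor <;> rintro ⟨rfl, hr⟩ <;> exact ⟨rfl, hr⟩

lemma capacity_routeOf_iff {κ : Type*} (R : ι → κ → ℝ) :
    (∀ core k, ∑ m ∈ univ.filter (fun m => routeOf cls g m = core), R m k ≤ 1) ↔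
      ∀ q r k, ∑ m ∈ univ.filter (fun m => cls m = q ∧ g q m = r), R m k ≤ 1 := by
  simp only [Prod.forall, filter_routeOf_eq]

lemma filter_fst_image_routeOf (q : Q) :
    (univ.image (routeOf cls g)).filter (·.1 = q)
      = ((univ.filter (cls · = q)).image (g q)).image (Prod.mk q) := by
  ext ⟨q', r⟩
  simp only [mem_filter, mem_image, mem_univ, true_and, routeOf, Prod.mk.injEq]
  constructor
  · rintro ⟨⟨m, rfl, rfl⟩, rfl⟩
    exact ⟨_, ⟨m, rfl, rfl⟩, rfl, rfl⟩
  · rintro ⟨_, ⟨m, rfl, rfl⟩, rfl, rfl⟩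
    exact ⟨⟨m, rfl, rfl⟩, rfl⟩

lemma card_image_routeOf [Fintype Q] :
    (univ.image (routeOf cls g)).card
      = ∑ q, ((univ.filter (cls · = q)).image (g q)).card := by
  rw [card_eq_sum_card_fiberwise (f := Prod.fst) (t := univ) fun _ _ => mem_univ _]
  refine sum_congr rfl fun q _ => ?_
  rw [filter_fst_image_routeOf, card_image_of_injective _ (Prod.mk_right_injective q)]

end Routing

section Costs

variable {ι κ Q : Type*} [Fintype ι] [DecidableEq Q] (B : Type*) [DecidableEq B]
  (R : ι → κ → ℝ) (cls : ι → Q)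

def routingCosts : Set ℕ :=
  {a | ∃ c : ι → Q × B, (∀ m, (c m).1 = cls m) ∧
    (∀ core k, ∑ m ∈ univ.filter (fun m => c m = core), R m k ≤ 1) ∧ a = (univ.image c).card}

def packingCosts (q : Q) : Set ℕ :=
  {b | ∃ g : ι → B, (∀ r k, ∑ m ∈ univ.filter (fun m => cls m = q ∧ g m = r), R m k ≤ 1) ∧
    b = ((univ.filter (fun m => cls m = q)).image g).card}

theorem sInf_routingCosts_eq_sum [Fintype Q] (hfeas : ∃ c : ι → Q × B, (∀ m, (c m).1 = cls m) ∧
      ∀ core k, ∑ m ∈ univ.filter (fun m => c m = core), R m k ≤ 1) :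
    sInf (routingCosts B R cls) = ∑ q, sInf (packingCosts B R cls q) := by
  obtain ⟨c₀, hc₀, hc₀cap⟩ := hfeas
  have hroutable : (routingCosts B R cls).Nonempty := ⟨_, c₀, hc₀, hc₀cap, rfl⟩
  rw [eq_routeOf_snd cls hc₀, capacity_routeOf_iff] at hc₀cap
  apply le_antisymm
  · choose g hgcap hgcost using fun q =>
      Nat.sInf_mem (s := packingCosts B R cls q) ⟨_, fun m => (c₀ m).2, hc₀cap q, rfl⟩
    refine Nat.sInf_le ⟨routeOf cls g, fun _ => rfl, (capacity_routeOf_iff cls g R).2 hgcap, ?_⟩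
    rw [card_image_routeOf]
    exact sum_congr rfl fun q _ => hgcost q
  · obtain ⟨c, hc, hccap, hccost⟩ := Nat.sInf_mem hroutable
    rw [eq_routeOf_snd cls hc, capacity_routeOf_iff] at hccap
    rw [hccost, eq_routeOf_snd cls hc, card_image_routeOf]
    exact sum_le_sum fun q _ => Nat.sInf_le ⟨fun m => (c m).2, hccap q, rfl⟩

end Costs

theorem core_layer_decomposition_general (h M K : ℕ)
    (R : Fin M → Fin K → ℝ)
    (cls : Fin M → Fin h)
    (hfeas : ∃ c : Fin M → Fin h × Fin h,
      (∀ m, (c m).1 = cls m) ∧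
      (∀ core : Fin h × Fin h, ∀ k : Fin K,
        ∑ m ∈ Finset.univ.filter (fun m => c m = core), R m k ≤ 1)) :
    sInf {a : ℕ | ∃ c : Fin M → Fin h × Fin h,
        (∀ m, (c m).1 = cls m) ∧
        (∀ core : Fin h × Fin h, ∀ k : Fin K,
          ∑ m ∈ Finset.univ.filter (fun m => c m = core), R m k ≤ 1) ∧
        a = (Finset.image c Finset.univ).card}
      = ∑ q : Fin h,
        sInf {b : ℕ | ∃ g : Fin M → Fin h,
          (∀ r : Fin h, ∀ k : Fin K,
            ∑ m ∈ Finset.univ.filter (fun m => cls m = q ∧ g m = r), R m k ≤ 1) ∧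
          b = (Finset.image g (Finset.univ.filter (fun m => cls m = q))).card} :=
  sInf_routingCosts_eq_sum (Fin h) R cls hfeas

/-- Layer-wise decomposition for cores of a fat-tree.  Cores are indexed by pairs
`(q, r) : Fin h × Fin h` (`h = z/2`), where `q` is the congruence class (aggregation
position) of the core.  Since a flow can only reach cores through the aggregation
switch in its class, a feasible routing must send each flow `m` to a core of class
`cls m`; the classes are therefore independent, and the minimum number of active core
nodes equals the sum over congruence classes of the optima of independent vector bin
packing instances (with `h` bins each) on the flows of that class. -/
theorem core_layer_decomposition (h M K : ℕ) (hpos : 0 < h)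
    (R : Fin M → Fin K → ℝ) (hR : ∀ m k, 0 ≤ R m k ∧ R m k ≤ 1)
    (cls : Fin M → Fin h)
    (hfeas : ∃ c : Fin M → Fin h × Fin h,
      (∀ m, (c m).1 = cls m) ∧
      (∀ core : Fin h × Fin h, ∀ k : Fin K,
        ∑ m ∈ Finset.univ.filter (fun m => c m = core), R m k ≤ 1)) :
    sInf {a : ℕ | ∃ c : Fin M → Fin h × Fin h,
        (∀ m, (c m).1 = cls m) ∧
        (∀ core : Fin h × Fin h, ∀ k : Fin K,
          ∑ m ∈ Finset.univ.filter (fun m => c m = core), R m k ≤ 1) ∧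
        a = (Finset.image c Finset.univ).card}
      = ∑ q : Fin h,
        sInf {b : ℕ | ∃ g : Fin M → Fin h,
          (∀ r : Fin h, ∀ k : Fin K,
            ∑ m ∈ Finset.univ.filter (fun m => cls m = q ∧ g m = r), R m k ≤ 1) ∧
          b = (Finset.image g (Finset.univ.filter (fun m => cls m = q))).card} :=
  core_layer_decomposition_general h M K R cls hfeas
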